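/- arXiv:cond-mat/9909233 — 6 statements merged into one kernel-verified Lean document; each statement's English description precedes it below -/
import Mathlib

section
/- For every comparator circuit C on W wires, every wire index i in Fin W, and every Boolean value b, there exists an output wire index j (depending only on C, i and b, not on the other inputs) such that for every input assignment x : Fin W → Bool with x i = b, the output satisfies eval(C, x) j = b. -/
/-- Applying a single comparator gate `g = (i, j)`: wire `i` receives the
minimum (AND) of the two incoming values and wire `j` receives the maximum (OR). -/
def CompCircuit.applyGate {ι : Type*} [DecidableEq ι] (g : ι × ι) (v : ι → Bool) : ι → Bool :=
  fun k => if k = g.1 then v g.1 && v g.2 else if k = g.2 then v g.1 || v g.2 else v k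

/-- Evaluating a comparator circuit, given as a list of gates processed in order. -/
def CompCircuit.eval {ι : Type*} [DecidableEq ι] (C : List (ι × ι)) (x : ι → Bool) : ι → Bool :=
  C.foldl (fun v g => CompCircuit.applyGate g v) x

/-!
A bit known on some wire stays known, on a wire determined by the circuit alone: a gate that
touches the wire sends `false` to its AND output (`false && _ = false`) and `true` to its OR
output (`true || _ = true`). Following the bit gate by gate gives the output wire `j`.
-/

namespace CompCircuit

variable {ι : Type*} [DecidableEq ι]

def trackGate (b : Bool) (g : ι × ι) (j : ι) : ι :=
  if j = g.1 ∨ j = g.2 then (if b then g.2 else g.1) else j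

def trackWire (b : Bool) (C : List (ι × ι)) (i : ι) : ι :=
  C.foldl (fun j g => trackGate b g j) i

theorem applyGate_trackGate {b : Bool} (g : ι × ι) {v : ι → Bool} {j : ι} (h : v j = b) :
    applyGate g v (trackGate b g j) = b := by
  obtain ⟨g₁, g₂⟩ := g
  unfold applyGate trackGate
  cases b <;> by_cases h₁ : j = g₁ <;> by_cases h₂ : j = g₂ <;> subst_vars <;> simp_all

theorem eval_cons (g : ι × ι) (C : List (ι × ι)) (x : ι → Bool) :
    eval (g :: C) x = eval C (applyGate g x) := rfl

theorem trackWire_cons (b : Bool) (g : ι × ι) (C : List (ι × ι)) (i : ι) :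
    trackWire b (g :: C) i = trackWire b C (trackGate b g i) := rfl

theorem eval_trackWire {b : Bool} (C : List (ι × ι)) {x : ι → Bool} {i : ι} (hx : x i = b) :
    eval C x (trackWire b C i) = b := by
  induction C generalizing x i with
  | nil => exact hx
  | cons g C ih =>
    rw [eval_cons, trackWire_cons]
    exact ih (applyGate_trackGate g hx)

end CompCircuit

theorem comparator_circuit_propagates_known_input_general
    {W : ℕ} (C : List (Fin W × Fin W)) (i : Fin W) (b : Bool) :
    ∃ j : Fin W, ∀ x : Fin W → Bool, x i = b → CompCircuit.eval C x j = b :=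
  ⟨CompCircuit.trackWire b C i, fun _ hx => CompCircuit.eval_trackWire C hx⟩

/-- For every comparator circuit `C` on `W` wires, every wire `i` and
every Boolean `b`, there is an output wire `j`, depending only on `C`, `i` and `b`,
such that for every input `x` with `x i = b` the output satisfies `eval C x j = b`. -/
theorem comparator_circuit_propagates_known_input
    {W : ℕ} (C : List (Fin W × Fin W)) (hC : ∀ g ∈ C, g.1 ≠ g.2) (i : Fin W) (b : Bool) :
    ∃ j : Fin W, ∀ x : Fin W → Bool, x i = b → CompCircuit.eval C x j = b :=
  comparator_circuit_propagates_known_input_general C i b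
end

section
/- Let P (particles) and Σ (sites) be finite sets and let M = ((i_1, s_1), …, (i_T, s_T)) be a finite list of moves in P × Σ. Then there is a comparator circuit C on |P| + |Σ| wires with exactly T gates — the t-th gate being the comparator whose AND-output goes to the wire of particle i_t and whose OR-output goes to the wire of site s_t — such that for every initial state (active : P → Bool, occupied : Σ → Bool), the final state obtained by executing the moves of M in order under the internal-DLA move dynamics equals the evaluation eval(C, ·) of C on the input assignment that places active on the particle wires and occupied on the site wires. That is, predicting internal DLA from a list of T moves reduces to evaluating a comparator circuit of size T. -/
/-- The internal-DLA move dynamics: executing the move `(i, s)` updates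
`occupied' s = occupied s || active i` and `active' i = occupied s && active i`,
leaving all other values unchanged. -/
def IDLA.moveStep {P Λ : Type*} [DecidableEq P] [DecidableEq Λ]
    (st : (P → Bool) × (Λ → Bool)) (m : P × Λ) : (P → Bool) × (Λ → Bool) :=
  (fun p => if p = m.1 then st.2 m.2 && st.1 m.1 else st.1 p,
   fun s => if s = m.2 then st.2 m.2 || st.1 m.1 else st.2 s)

/-- Executing a list of moves in order. -/
def IDLA.run {P Λ : Type*} [DecidableEq P] [DecidableEq Λ]
    (M : List (P × Λ)) (st : (P → Bool) × (Λ → Bool)) : (P → Bool) × (Λ → Bool) :=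
  M.foldl IDLA.moveStep st

/-! A move `(i, s)` is exactly the comparator with AND-output on the wire of `i` and OR-output on
the wire of `s`: on those two wires the gate computes `occupied s && active i` and
`occupied s || active i`, which is the move rule. Hence the circuit of the moves simulates the
dynamics gate by gate. -/

namespace IDLA

variable {P Λ : Type*} [DecidableEq P] [DecidableEq Λ]

def gate (m : P × Λ) : (P ⊕ Λ) × (P ⊕ Λ) := (Sum.inl m.1, Sum.inr m.2)

def wires (st : (P → Bool) × (Λ → Bool)) : P ⊕ Λ → Bool := Sum.elim st.1 st.2

theorem applyGate_gate_wires (st : (P → Bool) × (Λ → Bool)) (m : P × Λ) :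
    CompCircuit.applyGate (gate m) (wires st) = wires (moveStep st m) := by
  funext k
  cases k <;> simp [CompCircuit.applyGate, moveStep, gate, wires, Bool.and_comm, Bool.or_comm]

theorem eval_map_gate_wires (M : List (P × Λ)) (st : (P → Bool) × (Λ → Bool)) :
    CompCircuit.eval (M.map gate) (wires st) = wires (run M st) := by
  rw [CompCircuit.eval, List.foldl_map]
  exact List.foldl_hom wires applyGate_gate_wires

end IDLA

theorem internal_dla_prediction_in_CC_general
    {P Λ : Type*} [DecidableEq P] [DecidableEq Λ]
    (M : List (P × Λ)) :
    ∃ C : List ((P ⊕ Λ) × (P ⊕ Λ)),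
      C.length = M.length ∧
      (∀ g ∈ C, g.1 ≠ g.2) ∧
      C = M.map (fun m => (Sum.inl m.1, Sum.inr m.2)) ∧
      ∀ (active : P → Bool) (occupied : Λ → Bool),
        (∀ p, (IDLA.run M (active, occupied)).1 p
            = CompCircuit.eval C (Sum.elim active occupied) (Sum.inl p)) ∧
        (∀ s, (IDLA.run M (active, occupied)).2 s
            = CompCircuit.eval C (Sum.elim active occupied) (Sum.inr s)) := by
  refine ⟨M.map IDLA.gate, M.length_map _, List.forall_mem_map.2 fun _ _ => Sum.inl_ne_inr, rfl,
    fun active occupied => ⟨fun p => ?_, fun s => ?_⟩⟩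
  · exact (congrFun (IDLA.eval_map_gate_wires M (active, occupied)) (Sum.inl p)).symm
  · exact (congrFun (IDLA.eval_map_gate_wires M (active, occupied)) (Sum.inr s)).symm

/-- For finite sets `P` of particles and `Λ` of sites and any list `M`
of `T` moves, there is a comparator circuit `C` on the `|P| + |Λ|` wires `P ⊕ Λ` with
exactly `T` gates --- the `t`-th gate being the comparator whose AND-output goes to the
wire of particle `i_t` and whose OR-output goes to the wire of site `s_t` --- such that
for every initial state `(active, occupied)`, the final state of the internal-DLA move
dynamics equals the evaluation of `C` on the corresponding input assignment. -/
theorem internal_dla_prediction_in_CC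
    {P Λ : Type*} [Fintype P] [Fintype Λ] [DecidableEq P] [DecidableEq Λ]
    (M : List (P × Λ)) :
    ∃ C : List ((P ⊕ Λ) × (P ⊕ Λ)),
      C.length = M.length ∧
      (∀ g ∈ C, g.1 ≠ g.2) ∧
      C = M.map (fun m => (Sum.inl m.1, Sum.inr m.2)) ∧
      ∀ (active : P → Bool) (occupied : Λ → Bool),
        (∀ p, (IDLA.run M (active, occupied)).1 p
            = CompCircuit.eval C (Sum.elim active occupied) (Sum.inl p)) ∧
        (∀ s, (IDLA.run M (active, occupied)).2 s
            = CompCircuit.eval C (Sum.elim active occupied) (Sum.inr s)) :=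
  internal_dla_prediction_in_CC_general M
end

section
/- Let S be a set of sites, let a, b, c be pairwise distinct sites with c ∉ S, and let p = (p_0, …, p_ℓ) be a finite path on which a, b and c occur, with the first occurrence of a before the first occurrence of b before the first occurrence of c, and such that every site of p occurring strictly before the first occurrence of c, other than a and b, belongs to S. Let S' = deposit(S, p). Then: a ∈ S'; b ∈ S' if and only if (a ∈ S or b ∈ S); c ∈ S' if and only if (a ∈ S and b ∈ S); and S' agrees with S on every site other than a, b, c he. In other words, a single internal-DLA particle walking along p implements a comparator gate on the occupation bits of a and b, writing the OR to b and the AND to c. -/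
/-- Single-particle internal DLA deposition: given a set `S` of occupied sites and a
finite path `p`, the particle sticks at the first site of `p` not in `S`, and the new
occupied set is `S` together with that site; if every site of `p` lies in `S`, the
occupied set is unchanged. -/
def IDLA.deposit {α : Type*} [DecidableEq α] (S : Finset α) (p : List α) : Finset α :=
  match p.find? (fun z => decide (z ∉ S)) with
  | some z => insert z S
  | none => S

/-!
If `a ∉ S` the particle stops at `a`, since everything before `a` is occupied. If `a ∈ S`
but `b ∉ S` it passes `a` and stops at `b`. If both are occupied it passes through to the
vacant site `c`. In each case exactly one site is added, and reading off its membership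
gives the OR at `b` and the AND at `c`.
-/

theorem List.idxOf_lt_of_mem_take_idxOf {α : Type*} [DecidableEq α] {l : List α} {x z : α}
    (h : z ∈ l.take (l.idxOf x)) : l.idxOf z < l.idxOf x :=
  (List.mem_take_iff_idxOf_lt (List.mem_of_mem_take h)).1 h

namespace IDLA

variable {α : Type*} [DecidableEq α] {S : Finset α} {p : List α}

theorem deposit_eq_insert_of_forall_mem_take_idxOf {x : α} (hx : x ∈ p) (hxS : x ∉ S)
    (h : ∀ z ∈ p.take (p.idxOf x), z ∈ S) : deposit S p = insert x S := by
  suffices p.find? (fun z => decide (z ∉ S)) = some x by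
    unfold deposit; rw [this]
  induction p with
  | nil => simp at hx
  | cons y t ih =>
    by_cases hyx : y = x
    · subst hyx
      exact List.find?_cons_of_pos (by simpa using hxS)
    · have hidx : (y :: t).idxOf x = t.idxOf x + 1 := List.idxOf_cons_ne _ hyx
      rw [hidx] at h
      have hyS : y ∈ S := h y (by simp)
      rw [List.find?_cons_of_neg (by simpa using hyS)]
      exact ih ((List.mem_cons.1 hx).resolve_left (Ne.symm hyx))
        fun z hz => h z (by simpa using Or.inr hz)

theorem deposit_eq_insert_comparator_site {a b c : α} (hcS : c ∉ S)
    (ha : a ∈ p) (hb : b ∈ p) (hc : c ∈ p)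
    (hab : p.idxOf a < p.idxOf b) (hbc : p.idxOf b < p.idxOf c)
    (hS : ∀ z ∈ p.take (p.idxOf c), z ≠ a → z ≠ b → z ∈ S) :
    deposit S p = insert (if a ∈ S then if b ∈ S then c else b else a) S := by
  have prefix_mem {x : α} (hx : p.idxOf x ≤ p.idxOf c)
      (haS : p.idxOf a < p.idxOf x → a ∈ S) (hbS : p.idxOf b < p.idxOf x → b ∈ S) :
      ∀ z ∈ p.take (p.idxOf x), z ∈ S := by
    intro z hz
    have hzx := List.idxOf_lt_of_mem_take_idxOf hz
    by_cases hza : z = a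
    · exact hza ▸ haS (hza ▸ hzx)
    by_cases hzb : z = b
    · exact hzb ▸ hbS (hzb ▸ hzx)
    exact hS z (List.take_subset_take_left p hx hz) hza hzb
  by_cases haS : a ∈ S
  · by_cases hbS : b ∈ S
    · rw [if_pos haS, if_pos hbS]
      exact deposit_eq_insert_of_forall_mem_take_idxOf hc hcS
        (prefix_mem le_rfl (fun _ => haS) (fun _ => hbS))
    · rw [if_pos haS, if_neg hbS]
      exact deposit_eq_insert_of_forall_mem_take_idxOf hb hbS
        (prefix_mem hbc.le (fun _ => haS) (by omega))
  · rw [if_neg haS]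
    exact deposit_eq_insert_of_forall_mem_take_idxOf ha haS
      (prefix_mem (by omega) (by omega) (by omega))

end IDLA

/-- Let `a, b, c` be pairwise distinct sites with `c ∉ S`, occurring on
the path `p` with the first occurrence of `a` before the first occurrence of `b` before
the first occurrence of `c`, and suppose every site of `p` occurring strictly before the
first occurrence of `c`, other than `a` and `b`, belongs to `S`.  Then after depositing a
single particle along `p`: `a` is occupied; `b` is occupied iff (`a ∈ S` or `b ∈ S`);
`c` is occupied iff (`a ∈ S` and `b ∈ S`); and all other sites are unchanged.  Thus a
single internal-DLA particle implements a comparator gate on the occupation bits of `a`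
and `b`, writing the OR to `b` and the AND to `c`. -/
theorem walk_implements_comparator_gate {α : Type*} [DecidableEq α]
    (S : Finset α) (a b c : α) (p : List α)
    (hab : a ≠ b) (hac : a ≠ c) (hbc : b ≠ c) (hcS : c ∉ S)
    (ha : a ∈ p) (hb : b ∈ p) (hc : c ∈ p)
    (hab' : p.idxOf a < p.idxOf b) (hbc' : p.idxOf b < p.idxOf c)
    (hS : ∀ z ∈ p.take (p.idxOf c), z ≠ a → z ≠ b → z ∈ S) :
    a ∈ IDLA.deposit S p ∧
    (b ∈ IDLA.deposit S p ↔ (a ∈ S ∨ b ∈ S)) ∧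
    (c ∈ IDLA.deposit S p ↔ (a ∈ S ∧ b ∈ S)) ∧
    (∀ z, z ≠ a → z ≠ b → z ≠ c → (z ∈ IDLA.deposit S p ↔ z ∈ S)) := by
  rw [IDLA.deposit_eq_insert_comparator_site hcS ha hb hc hab' hbc' hS]
  split_ifs with haS hbS <;> simp_all [Finset.mem_insert, eq_comm]
end

section
/- For every comparator circuit C with N gates on W wires there exist: a finite set Q ⊂ ℤ² containing a designated origin site o, pairwise distinct input sites in(1), …, in(W) ∈ ℤ² \ Q, pairwise distinct output sites out(1), …, out(W) ∈ ℤ², and a sequence of N finite nearest-neighbour lattice paths p_1, …, p_N in ℤ², each starting at o and each of length at most C₀·(N + 1) for an absolute constant C₀, all depending only on C (not on the input), such that for every input assignment x : Fin W → Bool the following holds: starting from the occupied set S_0 = Q ∪ { in(w) : x w = true } and sequentially depositing N particles along p_1, …, p_N (each particle sticking at the first site of its path not in the current occupied set), the final occupied set S_N satisfies out(j) ∈ S_N if and only if eval(C, x) j = true, for every wire j. Thus evaluating any comparator circuit reduces to predicting internal DLA on the square lattice with one particle at a time, with total simulation time O(N²). -/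
/-- Two sites of the square lattice `ℤ²` are nearest neighbours. -/
def IDLA.Adj (u v : ℤ × ℤ) : Prop :=
  (u.1 - v.1).natAbs + (u.2 - v.2).natAbs = 1

/-! The corridor `y = 0` of `ℤ²` is kept fully occupied and every wire is a site on the row `y = 1`
above it, occupied iff the wire carries `true`. A gate `(i, j)` is simulated by one particle
that walks along the corridor and tries, in this order, the site of wire `i`, the site of wire
`j` and a fresh empty site `c`. It sticks at the first empty one, so afterwards `c` is occupied
iff both wires were true and the site of `j` iff at least one was; moving wire `i` to `c` makes
the configuration encode the gate's output. Wires occurring in the circuit start in columns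
`[0, 2N)` and the fresh sites are taken at columns `-1, -2, …`, so every path has length `O(N)`. -/

theorem Function.Injective.update_of_forall_ne {α β : Type*} [DecidableEq α] {f : α → β}
    (hf : Function.Injective f) {c : β} (hc : ∀ a, f a ≠ c) (a : α) :
    Function.Injective (Function.update f a c) := by
  intro x y hxy
  by_cases hx : x = a <;> by_cases hy : y = a <;>
    simp only [Function.update_apply, hx, hy, if_true, if_false] at hxy
  · rw [hx, hy]
  · exact (hc y hxy.symm).elim
  · exact (hc x hxy).elim
  · exact hf hxy

namespace IDLA

section Deposit

variable {α : Type*} [DecidableEq α]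

theorem deposit_cons (S : Finset α) (z : α) (l : List α) :
    deposit S (z :: l) = if z ∈ S then deposit S l else insert z S := by
  by_cases hz : z ∈ S <;> simp [deposit, hz]

theorem deposit_append_of_forall_mem {S : Finset α} {l₁ : List α} (h : ∀ z ∈ l₁, z ∈ S)
    (l₂ : List α) : deposit S (l₁ ++ l₂) = deposit S l₂ := by
  induction l₁ with
  | nil => rfl
  | cons z l ih =>
    rw [List.cons_append, deposit_cons, if_pos (h z List.mem_cons_self),
      ih fun y hy => h y (List.mem_cons_of_mem z hy)]

theorem subset_deposit (S : Finset α) (l : List α) : S ⊆ deposit S l := by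
  unfold deposit
  split
  · exact Finset.subset_insert _ _
  · exact subset_rfl

end Deposit

open Function

def corridorWalk (a b : ℤ) : List (ℤ × ℤ) :=
  (List.range ((b - a).natAbs + 1)).map fun k : ℕ => (a + (b - a).sign * k, 0)

def probe (a b : ℤ) : List (ℤ × ℤ) :=
  corridorWalk a b ++ [(b, 1)]

def gatePath (a b c : ℤ) : List (ℤ × ℤ) :=
  probe 0 a ++ probe a b ++ probe b c

lemma length_corridorWalk (a b : ℤ) : (corridorWalk a b).length = (b - a).natAbs + 1 := by
  simp [corridorWalk]

lemma head?_corridorWalk (a b : ℤ) : (corridorWalk a b).head? = some (a, 0) := by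
  simp [corridorWalk, List.head?_range]

lemma getLast?_corridorWalk (a b : ℤ) : (corridorWalk a b).getLast? = some (b, 0) := by
  simp [corridorWalk, List.getLast?_range, Int.sign_mul_abs]

lemma mem_corridorWalk {a b : ℤ} {p : ℤ × ℤ} (hp : p ∈ corridorWalk a b) :
    ∃ x ∈ Set.uIcc a b, (x, 0) = p := by
  simp only [corridorWalk, List.mem_map, List.mem_range] at hp
  obtain ⟨k, hk, rfl⟩ := hp
  refine ⟨_, ?_, rfl⟩
  rw [Set.mem_uIcc]
  rcases lt_trichotomy (b - a) 0 with h | h | h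
  · rw [Int.sign_eq_neg_one_of_neg h]; omega
  · obtain rfl : k = 0 := by omega
    simp only [CharP.cast_eq_zero, mul_zero, add_zero]; omega
  · rw [Int.sign_eq_one_of_pos h]; omega

lemma isChain_corridorWalk (a b : ℤ) : (corridorWalk a b).IsChain Adj := by
  rw [corridorWalk, List.isChain_map, List.isChain_range_succ]
  intro m hm
  have hs : (b - a).sign.natAbs = 1 := Int.natAbs_sign_of_ne_zero (by omega)
  simp only [Adj, sub_self, Int.natAbs_zero, add_zero]
  rw [show a + (b - a).sign * m - (a + (b - a).sign * (m.succ : ℕ)) = -(b - a).sign by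
    push_cast; ring, Int.natAbs_neg, hs]

lemma head?_probe (a b : ℤ) : (probe a b).head? = some (a, 0) := by
  simp [probe, List.head?_append, head?_corridorWalk]

lemma getLast?_probe (a b : ℤ) : (probe a b).getLast? = some (b, 1) := by
  simp [probe]

lemma isChain_probe (a b : ℤ) : (probe a b).IsChain Adj :=
  (isChain_corridorWalk a b).append (List.isChain_singleton _) (by
    simp [getLast?_corridorWalk, Adj])

lemma head?_gatePath (a b c : ℤ) : (gatePath a b c).head? = some (0, 0) := by
  simp [gatePath, List.head?_append, head?_probe]

lemma isChain_gatePath (a b c : ℤ) : (gatePath a b c).IsChain Adj := by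
  refine ((isChain_probe 0 a).append (isChain_probe a b) ?_).append (isChain_probe b c) ?_ <;>
    simp [List.getLast?_append, getLast?_probe, head?_probe, Adj]

lemma length_gatePath (a b c : ℤ) :
    (gatePath a b c).length = a.natAbs + (b - a).natAbs + (c - b).natAbs + 6 := by
  simp only [gatePath, probe, List.length_append, length_corridorWalk, List.length_singleton,
    sub_zero]
  omega

noncomputable def corridor (N : ℕ) : Finset (ℤ × ℤ) :=
  Finset.Icc (-(N : ℤ)) (2 * N) ×ˢ {0}

lemma deposit_probe_append {S : Finset (ℤ × ℤ)} {a b : ℤ}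
    (h : ∀ x ∈ Set.uIcc a b, (x, 0) ∈ S) (l : List (ℤ × ℤ)) :
    deposit S (probe a b ++ l) =
      if (b, 1) ∈ S then deposit S l else insert (b, 1) S := by
  rw [probe, List.append_assoc, deposit_append_of_forall_mem, List.singleton_append,
    deposit_cons]
  intro p hp
  obtain ⟨x, hx, rfl⟩ := mem_corridorWalk hp
  exact h x hx

lemma mem_deposit_gatePath {N : ℕ} {S : Finset (ℤ × ℤ)} (hS : corridor N ⊆ S) {a b c : ℤ}
    (ha : a ∈ Set.Icc (-(N : ℤ)) (2 * N)) (hb : b ∈ Set.Icc (-(N : ℤ)) (2 * N))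
    (hc : c ∈ Set.Icc (-(N : ℤ)) (2 * N)) (p : ℤ × ℤ) :
    p ∈ deposit S (gatePath a b c) ↔
      p ∈ S ∨ p = (a, 1) ∨ (p = (b, 1) ∧ (a, 1) ∈ S) ∨
        (p = (c, 1) ∧ (a, 1) ∈ S ∧ (b, 1) ∈ S) := by
  have hrow : ∀ x y, x ∈ Set.Icc (-(N : ℤ)) (2 * N) → y ∈ Set.Icc (-(N : ℤ)) (2 * N) →
      ∀ z ∈ Set.uIcc x y, (z, 0) ∈ S := fun x y hx hy z hz =>
    hS (by simpa [corridor] using Set.uIcc_subset_Icc hx hy hz)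
  have h0 : (0 : ℤ) ∈ Set.Icc (-(N : ℤ)) (2 * N) := by simp
  rw [gatePath, List.append_assoc, deposit_probe_append (hrow _ _ h0 ha),
    deposit_probe_append (hrow _ _ ha hb), ← List.append_nil (probe b c),
    deposit_probe_append (hrow _ _ hb hc)]
  split_ifs <;> simp [deposit] <;> grind

section Circuit

variable {W : ℕ}

def freshCol (t : ℕ) : ℤ := -(t : ℤ) - 1

def gatePaths : (Fin W → ℤ) → ℕ → List (Fin W × Fin W) → List (List (ℤ × ℤ))
  | _, _, [] => []
  | col, t, g :: C =>
    gatePath (col g.1) (col g.2) (freshCol t) :: gatePaths (update col g.1 (freshCol t)) (t + 1) C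

def finalCol : (Fin W → ℤ) → ℕ → List (Fin W × Fin W) → Fin W → ℤ
  | col, _, [] => col
  | col, t, g :: C => finalCol (update col g.1 (freshCol t)) (t + 1) C

lemma length_gatePaths (col : Fin W → ℤ) (t : ℕ) (C : List (Fin W × Fin W)) :
    (gatePaths col t C).length = C.length := by
  induction C generalizing col t with
  | nil => rfl
  | cons g C ih => simp [gatePaths, ih]

lemma freshCol_lt {col : Fin W → ℤ} {t : ℕ} (hcol : ∀ w, -(t : ℤ) ≤ col w) (w : Fin W) :
    freshCol t < col w := by
  have := hcol w
  simp only [freshCol]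
  omega

lemma neg_le_update_freshCol {col : Fin W → ℤ} {t : ℕ} (hcol : ∀ w, -(t : ℤ) ≤ col w)
    (i w : Fin W) : -((t + 1 : ℕ) : ℤ) ≤ update col i (freshCol t) w := by
  have := freshCol_lt hcol w
  rw [update_apply]
  split <;> simp only [freshCol] at * <;> omega

lemma finalCol_injective (C : List (Fin W × Fin W)) {col : Fin W → ℤ} {t : ℕ}
    (hinj : Injective col) (hcol : ∀ w, -(t : ℤ) ≤ col w) : Injective (finalCol col t C) := by
  induction C generalizing col t with
  | nil => exact hinj
  | cons g C ih =>
    exact ih (hinj.update_of_forall_ne (fun w => (freshCol_lt hcol w).ne') g.1)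
      (neg_le_update_freshCol hcol g.1)

structure ColumnBounds (N t : ℕ) (C : List (Fin W × Fin W)) (col : Fin W → ℤ) : Prop where
  length_le : t + C.length ≤ N
  neg_le : ∀ w, -(t : ℤ) ≤ col w
  gate_le : ∀ g ∈ C, col g.1 ≤ 2 * N ∧ col g.2 ≤ 2 * N

namespace ColumnBounds

variable {N t : ℕ} {g : Fin W × Fin W} {C : List (Fin W × Fin W)} {col : Fin W → ℤ}

lemma next (h : ColumnBounds N t (g :: C) col) :
    ColumnBounds N (t + 1) C (update col g.1 (freshCol t)) where
  length_le := by simpa [Nat.add_assoc, Nat.add_comm 1] using h.length_le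
  neg_le := neg_le_update_freshCol h.neg_le g.1
  gate_le g' hg' := by
    have hM := h.gate_le g' (List.mem_cons_of_mem g hg')
    simp only [update_apply, freshCol]
    constructor <;> split <;> omega

lemma mem_Icc (h : ColumnBounds N t (g :: C) col) :
    col g.1 ∈ Set.Icc (-(N : ℤ)) (2 * N) ∧ col g.2 ∈ Set.Icc (-(N : ℤ)) (2 * N) ∧
      freshCol t ∈ Set.Icc (-(N : ℤ)) (2 * N) := by
  have hN := h.length_le
  have h1 := h.neg_le g.1
  have h2 := h.neg_le g.2
  have hg := h.gate_le g List.mem_cons_self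
  simp only [List.length_cons] at hN
  simp only [Set.mem_Icc, freshCol]
  omega

end ColumnBounds

lemma exists_of_mem_gatePaths {N t : ℕ} {C : List (Fin W × Fin W)} {col : Fin W → ℤ}
    (h : ColumnBounds N t C col) {p : List (ℤ × ℤ)} (hp : p ∈ gatePaths col t C) :
    ∃ a b c : ℤ, p = gatePath a b c ∧ a ∈ Set.Icc (-(N : ℤ)) (2 * N) ∧
      b ∈ Set.Icc (-(N : ℤ)) (2 * N) ∧ c ∈ Set.Icc (-(N : ℤ)) (2 * N) := by
  induction C generalizing col t with
  | nil => simp [gatePaths] at hp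
  | cons g C ih =>
    rcases List.mem_cons.1 hp with rfl | hp
    · exact ⟨_, _, _, rfl, h.mem_Icc⟩
    · exact ih h.next hp

lemma mem_update_iff_applyGate {S S' : Finset (ℤ × ℤ)} {col : Fin W → ℤ}
    (hinj : Injective col) {v : Fin W → Bool} (hv : ∀ w, (col w, 1) ∈ S ↔ v w = true) {c : ℤ}
    (hc : ∀ w, col w ≠ c) (hcS : (c, 1) ∉ S) (g : Fin W × Fin W)
    (hS' : ∀ p, p ∈ S' ↔ p ∈ S ∨ p = (col g.1, 1) ∨
      (p = (col g.2, 1) ∧ (col g.1, 1) ∈ S) ∨ (p = (c, 1) ∧ (col g.1, 1) ∈ S ∧ (col g.2, 1) ∈ S))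
    (w : Fin W) : (update col g.1 c w, 1) ∈ S' ↔ CompCircuit.applyGate g v w = true := by
  obtain ⟨i, j⟩ := g
  by_cases hwi : w = i
  · subst hwi
    simp [hS', hv, hcS, (hc _).symm, CompCircuit.applyGate]
  by_cases hwj : w = j
  · subst hwj
    simp [hS', hv, hwi, hinj.ne hwi, hc, CompCircuit.applyGate, or_comm]
  · simp [hS', hv, hwi, hwj, hinj.ne hwi, hinj.ne hwj, hc, CompCircuit.applyGate]

theorem mem_foldl_deposit_gatePaths_iff {N t : ℕ} {C : List (Fin W × Fin W)}
    {col : Fin W → ℤ} {v : Fin W → Bool} {S : Finset (ℤ × ℤ)} (hb : ColumnBounds N t C col)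
    (hinj : Injective col) (hS : corridor N ⊆ S) (hfree : ∀ x, (x, 1) ∈ S → -(t : ℤ) ≤ x)
    (hv : ∀ w, (col w, 1) ∈ S ↔ v w = true) (j : Fin W) :
    (finalCol col t C j, 1) ∈ (gatePaths col t C).foldl deposit S ↔
      CompCircuit.eval C v j = true := by
  induction C generalizing col t v S with
  | nil => exact hv j
  | cons g C ih =>
    obtain ⟨hi, hj, hc⟩ := hb.mem_Icc
    have hS' := mem_deposit_gatePath hS hi hj hc
    have hfresh : ∀ w, col w ≠ freshCol t := fun w => (freshCol_lt hb.neg_le w).ne'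
    refine ih hb.next (hinj.update_of_forall_ne hfresh g.1) (hS.trans (subset_deposit _ _)) ?_
      (mem_update_iff_applyGate hinj hv hfresh
        (fun h => (hfree _ h).not_gt (by simp [freshCol])) g hS')
    intro x hx
    rcases (hS' _).1 hx with h | h | ⟨h, -⟩ | ⟨h, -⟩
    · have := hfree x h
      push_cast; omega
    all_goals
      obtain ⟨rfl, -⟩ := Prod.mk.inj h
      have := hb.neg_le g.1
      have := hb.neg_le g.2
      push_cast [freshCol]; omega

def initCol (C : List (Fin W × Fin W)) (w : Fin W) : ℤ :=
  (C.map Prod.fst ++ C.map Prod.snd ++ List.finRange W).idxOf w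

lemma initCol_injective (C : List (Fin W × Fin W)) : Injective (initCol C) := fun u _ h =>
  (List.idxOf_inj (List.mem_append_right _ (List.mem_finRange u))).1 (Nat.cast_injective h)

lemma initCol_nonneg (C : List (Fin W × Fin W)) (w : Fin W) : 0 ≤ initCol C w :=
  Nat.cast_nonneg _

lemma initCol_lt {C : List (Fin W × Fin W)} {w : Fin W}
    (hw : w ∈ C.map Prod.fst ++ C.map Prod.snd) : initCol C w < 2 * C.length := by
  have := List.idxOf_lt_length_of_mem hw
  rw [initCol, List.idxOf_append_of_mem hw]
  simp only [List.length_append, List.length_map] at this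
  omega

lemma columnBounds_initCol (C : List (Fin W × Fin W)) :
    ColumnBounds C.length 0 C (initCol C) where
  length_le := (Nat.zero_add _).le
  neg_le w := by simpa using initCol_nonneg C w
  gate_le _ hg := ⟨(initCol_lt (List.mem_append_left _ (List.mem_map_of_mem hg))).le,
    (initCol_lt (List.mem_append_right _ (List.mem_map_of_mem hg))).le⟩

end Circuit

end IDLA

/-- For every comparator circuit `C` with `N` gates on `W` wires there
exist a finite set `Q ⊆ ℤ²` containing a designated origin `o`, pairwise distinct input
sites `inp w ∉ Q`, pairwise distinct output sites `out w`, and a sequence of `N` finite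
nearest-neighbour lattice paths, each starting at `o` and of length at most
`C₀ * (N + 1)` for an absolute constant `C₀`, all depending only on `C`, such that for
every input assignment `x`: starting from the occupied set `Q` together with the input
sites of the true wires and sequentially depositing the `N` particles along the paths,
the final occupied set contains `out j` iff `eval C x j = true`, for every wire `j`. -/
theorem internal_dla_prediction_is_CC_hard :
    ∃ C₀ : ℕ, ∀ (W : ℕ) (C : List (Fin W × Fin W)), (∀ g ∈ C, g.1 ≠ g.2) →
      ∃ (Q : Finset (ℤ × ℤ)) (o : ℤ × ℤ) (inp out : Fin W → ℤ × ℤ)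
        (ps : List (List (ℤ × ℤ))),
        o ∈ Q ∧
        Function.Injective inp ∧ (∀ w, inp w ∉ Q) ∧
        Function.Injective out ∧
        ps.length = C.length ∧
        (∀ p ∈ ps, p.head? = some o ∧ List.Chain' IDLA.Adj p ∧
          p.length ≤ C₀ * (C.length + 1)) ∧
        ∀ x : Fin W → Bool, ∀ j : Fin W,
          (out j ∈ ps.foldl IDLA.deposit
              (Q ∪ (Finset.univ.filter (fun w => x w = true)).image inp))
            ↔ CompCircuit.eval C x j = true := by
  refine ⟨8, fun W C _ => ?_⟩
  have hbounds := IDLA.columnBounds_initCol C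
  have hinj := IDLA.initCol_injective C
  refine ⟨IDLA.corridor C.length, (0, 0), fun w => (IDLA.initCol C w, 1),
    fun w => (IDLA.finalCol (IDLA.initCol C) 0 C w, 1), IDLA.gatePaths (IDLA.initCol C) 0 C,
    by simp [IDLA.corridor], fun u w h => hinj (Prod.mk.inj h).1,
    fun w => by simp [IDLA.corridor],
    fun u w h => IDLA.finalCol_injective C hinj hbounds.neg_le (Prod.mk.inj h).1,
    IDLA.length_gatePaths _ _ _, fun p hp => ?_, fun x j => ?_⟩
  · obtain ⟨a, b, c, rfl, ha, hb, hc⟩ := IDLA.exists_of_mem_gatePaths hbounds hp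
    refine ⟨IDLA.head?_gatePath a b c, IDLA.isChain_gatePath a b c, ?_⟩
    rw [IDLA.length_gatePath]
    simp only [Set.mem_Icc] at ha hb hc
    omega
  · refine IDLA.mem_foldl_deposit_gatePaths_iff hbounds hinj Finset.subset_union_left ?_ ?_ j
    · simpa [IDLA.corridor] using fun w _ => IDLA.initCol_nonneg C w
    · simp [IDLA.corridor, hinj.eq_iff]
end

section
/- Fix n, and for each i ∈ {1, …, n} a path r_i(1), …, r_i(ℓ_i) of pairwise distinct sites with ℓ_i ≥ i. Then there is exactly one configuration (τ_1, …, τ_n) that is both well-ordered and singly occupied, namely the sequential configuration defined recursively by τ_i = min { t : r_i(t) ∉ {s_1, …, s_{i−1}} } (which exists because ℓ_i ≥ i and the sites of path i are distinct). Equivalently, the sequential configuration is the unique well-ordered configuration with energy E = 0. -/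
namespace IDLA

variable {n : ℕ} {α : Type*} [DecidableEq α] {ℓ : Fin n → ℕ}

/-- The cluster: the union of the live segments `r i t`, `t ≤ τ i`, of the `n` paths. -/
def cluster (r : ∀ i, Fin (ℓ i) → α) (τ : ∀ i, Fin (ℓ i)) : Finset α :=
  Finset.univ.biUnion fun i => (Finset.univ.filter fun t => t ≤ τ i).image (r i)

/-- `mult r τ z` is the number of labels at `z`, i.e. the number of paths whose
sticking point `s i = r i (τ i)` equals `z`. -/
def mult (r : ∀ i, Fin (ℓ i) → α) (τ : ∀ i, Fin (ℓ i)) (z : α) : ℕ :=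
  (Finset.univ.filter fun i => r i (τ i) = z).card

/-- The energy `E = ∑_{z ∈ S} |m(z) − 1|` of a configuration. -/
def energy (r : ∀ i, Fin (ℓ i) → α) (τ : ∀ i, Fin (ℓ i)) : ℕ :=
  ∑ z ∈ cluster r τ, ((mult r τ z : ℤ) - 1).natAbs

/-- A configuration is well-ordered if for all `i, j` and all `t < τ i`,
`r i t = s j` implies `j < i`. -/
def WellOrdered (r : ∀ i, Fin (ℓ i) → α) (τ : ∀ i, Fin (ℓ i)) : Prop :=
  ∀ (i j : Fin n) (t : Fin (ℓ i)), t < τ i → r i t = r j (τ j) → j < i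

/-- A configuration is singly occupied if `m(z) = 1` for every cluster site `z`. -/
def SinglyOccupied (r : ∀ i, Fin (ℓ i) → α) (τ : ∀ i, Fin (ℓ i)) : Prop :=
  ∀ z ∈ cluster r τ, mult r τ z = 1

/-- The sequential configuration: `τ i` is the first time `t` at which `r i t` is not a
sticking point of an earlier path, i.e. `τ_i = min { t : r_i(t) ∉ {s_1, …, s_{i−1}} }`. -/
def SeqConfig (r : ∀ i, Fin (ℓ i) → α) (τ : ∀ i, Fin (ℓ i)) : Prop :=
  ∀ i : Fin n, (∀ j, j < i → r j (τ j) ≠ r i (τ i)) ∧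
    ∀ t : Fin (ℓ i), t < τ i → ∃ j, j < i ∧ r j (τ j) = r i t

end IDLA

/-! A configuration is singly occupied exactly when its labels are pairwise distinct and every
cluster site carries one. Combined with well-orderedness this says that each site `r i t`,
`t < τ i`, is the label of an earlier path while `s i` is not, which is the defining property
of the sequential configuration. That property pins down `τ i` by strong induction on `i`, and it
is satisfiable because the `i` earlier labels cannot exhaust the `ℓ i ≥ i + 1` distinct sites of
path `i`. -/

namespace IDLA

variable {n : ℕ} {α : Type*} {ℓ : Fin n → ℕ} {r : ∀ i, Fin (ℓ i) → α} {τ σ : ∀ i, Fin (ℓ i)}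

theorem SeqConfig.injective (hτ : SeqConfig r τ) : Function.Injective fun i => r i (τ i) := by
  intro i j h
  rcases lt_trichotomy i j with hij | rfl | hji
  · exact absurd h ((hτ j).1 i hij)
  · rfl
  · exact absurd h.symm ((hτ i).1 j hji)

theorem SeqConfig.wellOrdered (hτ : SeqConfig r τ) : WellOrdered r τ := by
  intro i j t ht hsame
  obtain ⟨k, hk, hk_eq⟩ := (hτ i).2 t ht
  exact hτ.injective (hk_eq.trans hsame) ▸ hk

theorem SeqConfig.not_lt_of_eqOn (hτ : SeqConfig r τ) (hσ : SeqConfig r σ) {i : Fin n}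
    (heq : ∀ j < i, τ j = σ j) : ¬ τ i < σ i := fun hlt => by
  obtain ⟨j, hj, hsame⟩ := (hσ i).2 (τ i) hlt
  exact (hτ i).1 j hj (heq j hj ▸ hsame)

theorem SeqConfig.unique (hτ : SeqConfig r τ) (hσ : SeqConfig r σ) : τ = σ := by
  funext i
  induction i using WellFoundedLT.induction with
  | ind i ih =>
    exact le_antisymm (not_lt.mp (hσ.not_lt_of_eqOn hτ fun j hj => (ih j hj).symm))
      (not_lt.mp (hτ.not_lt_of_eqOn hσ ih))

variable [DecidableEq α]

section FirstFresh

variable {m : ℕ} (f : Fin m → α) (S : Finset α)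

theorem exists_apply_notMem_of_card_lt (hf : Function.Injective f) (hS : S.card < m) :
    ∃ t, f t ∉ S := by
  have : S.card < (Finset.univ.image f).card := by
    rwa [Finset.card_image_of_injective _ hf, Finset.card_univ, Fintype.card_fin]
  obtain ⟨_, ht, hS⟩ := Finset.exists_mem_notMem_of_card_lt_card this
  obtain ⟨t, -, rfl⟩ := Finset.mem_image.mp ht
  exact ⟨t, hS⟩

noncomputable def firstFresh (h : ∃ t, f t ∉ S) : Fin m :=
  (Finset.univ.filter fun t => f t ∉ S).min' (by simpa [Finset.filter_nonempty_iff] using h)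

variable {f S}

theorem apply_firstFresh_notMem (h : ∃ t, f t ∉ S) : f (firstFresh f S h) ∉ S :=
  (Finset.mem_filter.mp (Finset.min'_mem (Finset.univ.filter fun t => f t ∉ S) _)).2

theorem apply_mem_of_lt_firstFresh (h : ∃ t, f t ∉ S) {t : Fin m} (ht : t < firstFresh f S h) :
    f t ∈ S := by
  by_contra hfresh
  exact (Finset.min'_le _ t (by simpa using hfresh)).not_gt ht

end FirstFresh

noncomputable def seqTau (hℓ : ∀ i : Fin n, (i : ℕ) + 1 ≤ ℓ i) (r : ∀ i, Fin (ℓ i) → α)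
    (hr : ∀ i, Function.Injective (r i)) (i : Fin n) : Fin (ℓ i) :=
  firstFresh (r i) ((Finset.Iio i).attach.image fun j => r j.1 (seqTau hℓ r hr j.1)) <|
    exists_apply_notMem_of_card_lt _ _ (hr i) <| calc
      _ ≤ (Finset.Iio i).attach.card := Finset.card_image_le
      _ = i := by rw [Finset.card_attach, Fin.card_Iio]
      _ < ℓ i := hℓ i
termination_by i
decreasing_by exact Fin.lt_def.mp (Finset.mem_Iio.mp j.2)

theorem seqConfig_seqTau (hℓ : ∀ i : Fin n, (i : ℕ) + 1 ≤ ℓ i) (r : ∀ i, Fin (ℓ i) → α)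
    (hr : ∀ i, Function.Injective (r i)) : SeqConfig r (seqTau hℓ r hr) := by
  intro i
  set S := (Finset.Iio i).attach.image fun j => r j.1 (seqTau hℓ r hr j.1)
  have mem_S {x : α} : x ∈ S ↔ ∃ j < i, r j (seqTau hℓ r hr j) = x := by simp [S]
  obtain ⟨hfresh, hstale⟩ :
      r i (seqTau hℓ r hr i) ∉ S ∧ ∀ t < seqTau hℓ r hr i, r i t ∈ S := by
    rw [seqTau]
    exact ⟨apply_firstFresh_notMem _, fun _ => apply_mem_of_lt_firstFresh _⟩
  exact ⟨fun j hj hsame => hfresh (mem_S.mpr ⟨j, hj, hsame⟩),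
    fun t ht => mem_S.mp (hstale t ht)⟩

theorem mem_cluster {z : α} : z ∈ cluster r τ ↔ ∃ i t, t ≤ τ i ∧ r i t = z := by
  simp [cluster]

theorem label_mem_cluster (i : Fin n) : r i (τ i) ∈ cluster r τ :=
  mem_cluster.mpr ⟨i, τ i, le_rfl, rfl⟩

theorem SeqConfig.exists_label_eq (hτ : SeqConfig r τ) {z : α} (hz : z ∈ cluster r τ) :
    ∃ i, r i (τ i) = z := by
  obtain ⟨i, t, hle, rfl⟩ := mem_cluster.mp hz
  rcases hle.lt_or_eq with hlt | rfl
  · obtain ⟨j, -, hj⟩ := (hτ i).2 t hlt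
    exact ⟨j, hj⟩
  · exact ⟨i, rfl⟩

theorem mult_eq_one_iff {z : α} : mult r τ z = 1 ↔ ∃! i, r i (τ i) = z := by
  simp [mult, Finset.card_eq_one_iff_existsUnique]

theorem singlyOccupied_iff : SinglyOccupied r τ ↔
    Function.Injective (fun i => r i (τ i)) ∧ ∀ z ∈ cluster r τ, ∃ i, r i (τ i) = z := by
  simp only [SinglyOccupied, mult_eq_one_iff]
  refine ⟨fun h => ⟨fun i j hij => (h _ (label_mem_cluster j)).unique hij rfl,
    fun z hz => (h z hz).exists⟩, fun ⟨hinj, hcov⟩ z hz => ?_⟩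
  obtain ⟨i, rfl⟩ := hcov z hz
  exact ⟨i, rfl, fun j hj => hinj hj⟩

theorem wellOrdered_and_singlyOccupied_iff :
    WellOrdered r τ ∧ SinglyOccupied r τ ↔ SeqConfig r τ := by
  refine ⟨fun ⟨hwo, hso⟩ i => ?_, fun hτ => ⟨hτ.wellOrdered,
    singlyOccupied_iff.mpr ⟨hτ.injective, fun _ => hτ.exists_label_eq⟩⟩⟩
  obtain ⟨hinj, hcov⟩ := singlyOccupied_iff.mp hso
  refine ⟨fun j hj hsame => hj.ne (hinj hsame), fun t ht => ?_⟩
  obtain ⟨j, hj⟩ := hcov (r i t) (mem_cluster.mpr ⟨i, t, ht.le, rfl⟩)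
  exact ⟨j, hwo i j t ht hj.symm, hj⟩

theorem singlyOccupied_iff_energy_eq_zero : SinglyOccupied r τ ↔ energy r τ = 0 := by
  simp only [SinglyOccupied, energy, Finset.sum_eq_zero_iff, Int.natAbs_eq_zero, sub_eq_zero,
    Nat.cast_eq_one]

end IDLA

/-- For `n` paths of pairwise distinct sites with `ℓ i ≥ i` (in
0-indexed form, `ℓ i ≥ i + 1`), there is exactly one configuration that is both
well-ordered and singly occupied, namely the sequential configuration defined by
`τ_i = min { t : r_i(t) ∉ {s_1, …, s_{i−1}} }`; equivalently, the sequential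
configuration is the unique well-ordered configuration with energy `E = 0`. -/
theorem sequential_configuration_unique
    {n : ℕ} {α : Type*} [DecidableEq α] {ℓ : Fin n → ℕ}
    (hℓ : ∀ i : Fin n, (i : ℕ) + 1 ≤ ℓ i)
    (r : ∀ i, Fin (ℓ i) → α) (hr : ∀ i, Function.Injective (r i)) :
    (∃! τ : ∀ i, Fin (ℓ i), IDLA.WellOrdered r τ ∧ IDLA.SinglyOccupied r τ) ∧
    (∀ τ : ∀ i, Fin (ℓ i),
      (IDLA.WellOrdered r τ ∧ IDLA.SinglyOccupied r τ) ↔ IDLA.SeqConfig r τ) ∧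
    (∀ τ : ∀ i, Fin (ℓ i), IDLA.WellOrdered r τ →
      (IDLA.SinglyOccupied r τ ↔ IDLA.energy r τ = 0)) := by
  have hseq := IDLA.seqConfig_seqTau hℓ r hr
  refine ⟨⟨IDLA.seqTau hℓ r hr, IDLA.wellOrdered_and_singlyOccupied_iff.mpr hseq, fun σ hσ => ?_⟩,
    fun τ => IDLA.wellOrdered_and_singlyOccupied_iff,
    fun τ _ => IDLA.singlyOccupied_iff_energy_eq_zero⟩
  exact (IDLA.wellOrdered_and_singlyOccupied_iff.mp hσ).unique hseq
end

section
/- Cascades of pebble moves terminate and strictly decrease the energy: in a well-ordered configuration, whenever the destination of a pebble move of a label i is an occupied site, the pebble index of that site exceeds i. Consequently, in any cascade of pebble moves — a sequence of pebble moves in which each subsequent move moves the pebble index of the previous move's destination site — the moved labels are strictly increasing, so the cascade has length at most n; and if at every step of the cascade the moved label has a destination, then the final move of the cascade has as destination a hole or a site outside the cluster S, so the cascade strictly decreases the energy (by at least 1). -/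
/-!
When label `i` moves, its destination, if occupied, has pebble index `> i`: an occupied site
is in the cluster, so only clause (2) of `IsDest` applies. The origin has pebble index `i`, so
the destination differs from it. Along a cascade the next label is the pebble index of a site
that was already occupied before the move, so the labels strictly increase and there are at
most `n` moves.

A move takes a pebble off a multiply occupied site (energy `-1`) and puts it on the
destination: `+1` if that site was occupied, `-1` if it was a hole, `0` if it was outside the
cluster. Hence the energy never increases. If the cascade cannot be continued, the last
destination was unoccupied: otherwise it would now be multiply occupied, and its pebble
index, which has a destination, could make a further move. So the last move lowers the energy.
-/

namespace IDLA

variable {n : ℕ} {α : Type*} [DecidableEq α] {ℓ : Fin n → ℕ}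

/-- `z` is a possible destination for the label `i`: it is either (1) not in the
cluster `S`, or (2) an occupied site whose pebble index (the largest label sticking
there) exceeds `i`, or (3) a hole (a cluster site with no label) whose hole index (the
smallest label live there) exceeds `i`. -/
def IsDest (r : ∀ i, Fin (ℓ i) → α) (τ : ∀ i, Fin (ℓ i)) (i : Fin n) (z : α) : Prop :=
  z ∉ cluster r τ ∨
  (∃ j, i < j ∧ r j (τ j) = z) ∨
  (mult r τ z = 0 ∧ z ∈ cluster r τ ∧
    ∀ j, (∃ t : Fin (ℓ j), t ≤ τ j ∧ r j t = z) → i < j)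

/-- `i` is the pebble index of the site `z`: `i` sticks at `z` and is the largest label
doing so. -/
def IsPebbleIndex (r : ∀ i, Fin (ℓ i) → α) (τ : ∀ i, Fin (ℓ i)) (i : Fin n) (z : α) :
    Prop :=
  r i (τ i) = z ∧ ∀ j, r j (τ j) = z → j ≤ i

/-- A pebble move of the label `i`, turning the configuration `τ` into `τ'`: the site
`r i (τ i)` is multiply occupied with pebble index `i`, and `τ'` is obtained from `τ` by
moving `τ i` to the first time `t' > τ i` at which the path of `i` is at a destination. -/
def PebbleMove (r : ∀ i, Fin (ℓ i) → α) (τ : ∀ i, Fin (ℓ i)) (i : Fin n)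
    (τ' : ∀ i, Fin (ℓ i)) : Prop :=
  2 ≤ mult r τ (r i (τ i)) ∧
  IsPebbleIndex r τ i (r i (τ i)) ∧
  ∃ t' : Fin (ℓ i), τ i < t' ∧ IsDest r τ i (r i t') ∧
    (∀ t : Fin (ℓ i), τ i < t → t < t' → ¬ IsDest r τ i (r i t)) ∧
    τ' = Function.update τ i t'


section

variable {r : ∀ i, Fin (ℓ i) → α} {τ τ' : ∀ i, Fin (ℓ i)} {i j : Fin n} {z : α}

lemma mem_cluster_of_le {t : Fin (ℓ j)} (h : t ≤ τ j) : r j t ∈ cluster r τ := by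
  simp only [cluster, Finset.mem_biUnion, Finset.mem_image, Finset.mem_filter,
    Finset.mem_univ, true_and]
  exact ⟨j, t, h, rfl⟩

lemma mult_pos_iff : 0 < mult r τ z ↔ ∃ j, r j (τ j) = z := by
  simp [mult, Finset.card_pos, Finset.filter_nonempty_iff]

lemma mem_cluster_of_mult_pos (h : 0 < mult r τ z) : z ∈ cluster r τ := by
  obtain ⟨j, rfl⟩ := mult_pos_iff.mp h
  exact mem_cluster_of_le le_rfl

lemma exists_isPebbleIndex (h : 0 < mult r τ z) : ∃ i, IsPebbleIndex r τ i z := by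
  obtain ⟨i, hi, hmax⟩ := Finset.exists_max_image (Finset.univ.filter fun j => r j (τ j) = z)
    id (Finset.card_pos.mp h)
  exact ⟨i, (Finset.mem_filter.mp hi).2, fun j hj => hmax j (by simpa using hj)⟩

lemma mult_update_add (r : ∀ i, Fin (ℓ i) → α) (τ : ∀ i, Fin (ℓ i)) (i : Fin n)
    (t' : Fin (ℓ i)) (w : α) :
    mult r (Function.update τ i t') w + (if r i (τ i) = w then 1 else 0)
      = mult r τ w + (if r i t' = w then 1 else 0) := by
  unfold mult
  rw [Finset.card_filter, Finset.card_filter,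
    ← Finset.sum_erase_add _ _ (Finset.mem_univ i),
    ← Finset.sum_erase_add _ _ (Finset.mem_univ i),
    Finset.sum_congr rfl fun j hj => by rw [Function.update_of_ne (Finset.ne_of_mem_erase hj)],
    Function.update_self]
  omega

lemma cluster_update {t' : Fin (ℓ i)} (h : τ i < t')
    (hmid : ∀ t : Fin (ℓ i), τ i < t → t < t' → r i t ∈ cluster r τ) :
    cluster r (Function.update τ i t') = insert (r i t') (cluster r τ) := by
  ext w
  simp only [Finset.mem_insert]
  constructor
  · intro hw
    simp only [cluster, Finset.mem_biUnion, Finset.mem_image, Finset.mem_filter,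
      Finset.mem_univ, true_and] at hw
    obtain ⟨j, t, ht, rfl⟩ := hw
    by_cases hji : j = i
    · subst hji
      rw [Function.update_self] at ht
      rcases ht.lt_or_eq with ht | rfl
      · by_cases hτ : t ≤ τ j
        · exact .inr (mem_cluster_of_le hτ)
        · exact .inr (hmid t (not_le.mp hτ) ht)
      · exact .inl rfl
    · rw [Function.update_of_ne hji] at ht
      exact .inr (mem_cluster_of_le ht)
  · rintro (rfl | hw)
    · exact mem_cluster_of_le (Function.update_self i t' τ).ge
    · simp only [cluster, Finset.mem_biUnion, Finset.mem_image, Finset.mem_filter,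
        Finset.mem_univ, true_and] at hw ⊢
      obtain ⟨j, t, ht, rfl⟩ := hw
      refine ⟨j, t, ?_, rfl⟩
      by_cases hji : j = i
      · subst hji; rw [Function.update_self]; exact ht.trans h.le
      · rwa [Function.update_of_ne hji]

lemma IsDest.exists_lt_of_mult_pos (hd : IsDest r τ i z) (hz : 0 < mult r τ z) :
    ∃ j, i < j ∧ r j (τ j) = z := by
  rcases hd with hS | hlt | ⟨hzero, -⟩
  · exact absurd (mem_cluster_of_mult_pos hz) hS
  · exact hlt
  · omega

lemma IsDest.ne_of_isPebbleIndex (hd : IsDest r τ i z)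
    (hi : IsPebbleIndex r τ i (r i (τ i))) : z ≠ r i (τ i) := by
  rintro rfl
  obtain ⟨j, hij, hj⟩ := hd.exists_lt_of_mult_pos (mult_pos_iff.mpr ⟨i, rfl⟩)
  exact (hi.2 j hj).not_gt hij

lemma exists_pebbleMove (hi : IsPebbleIndex r τ i z) (hm : 2 ≤ mult r τ z)
    (hd : ∃ t, τ i < t ∧ IsDest r τ i (r i t)) : ∃ τ', PebbleMove r τ i τ' := by
  obtain ⟨t', ht', hmin⟩ :=
    WellFounded.has_min wellFounded_lt {t | τ i < t ∧ IsDest r τ i (r i t)} hd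
  obtain rfl := hi.1
  exact ⟨_, hm, hi, t', ht'.1, ht'.2, fun t h1 h2 hdt => hmin t ⟨h1, hdt⟩ h2, rfl⟩

namespace PebbleMove

lemma isDest (h : PebbleMove r τ i τ') : IsDest r τ i (r i (τ' i)) := by
  obtain ⟨-, -, t', -, hd, -, rfl⟩ := h
  simpa using hd

lemma apply_of_ne (h : PebbleMove r τ i τ') (hj : j ≠ i) : τ' j = τ j := by
  obtain ⟨-, -, t', -, -, -, rfl⟩ := h
  exact Function.update_of_ne hj ..

lemma dest_ne_origin (h : PebbleMove r τ i τ') : r i (τ' i) ≠ r i (τ i) :=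
  h.isDest.ne_of_isPebbleIndex h.2.1

lemma mult_dest (h : PebbleMove r τ i τ') :
    mult r τ' (r i (τ' i)) = mult r τ (r i (τ' i)) + 1 := by
  have hne := h.dest_ne_origin
  obtain ⟨-, -, t', -, -, -, rfl⟩ := h
  have := mult_update_add r τ i t' (r i t')
  simp only [Function.update_self] at hne ⊢
  rw [if_neg hne.symm, if_pos rfl] at this
  omega

lemma mult_origin (h : PebbleMove r τ i τ') :
    mult r τ' (r i (τ i)) + 1 = mult r τ (r i (τ i)) := by
  have hne := h.dest_ne_origin
  obtain ⟨-, -, t', -, -, -, rfl⟩ := h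
  have := mult_update_add r τ i t' (r i (τ i))
  simp only [Function.update_self] at hne
  rwa [if_pos rfl, if_neg hne] at this

lemma mult_of_ne (h : PebbleMove r τ i τ') {w : α} (ho : w ≠ r i (τ i))
    (hd : w ≠ r i (τ' i)) : mult r τ' w = mult r τ w := by
  obtain ⟨-, -, t', -, -, -, rfl⟩ := h
  have := mult_update_add r τ i t' w
  simp only [Function.update_self] at hd
  rwa [if_neg (Ne.symm ho), if_neg (Ne.symm hd), add_zero, add_zero] at this

lemma cluster_eq (h : PebbleMove r τ i τ') :
    cluster r τ' = insert (r i (τ' i)) (cluster r τ) := by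
  obtain ⟨-, -, t', hlt, -, hmin, rfl⟩ := h
  rw [Function.update_self]
  refine cluster_update hlt fun t h1 h2 => ?_
  by_contra hS
  exact hmin t h1 h2 (.inl hS)

lemma energy_add_le (h : PebbleMove r τ i τ') :
    energy r τ' + (if mult r τ (r i (τ' i)) = 0 then 1 else 0) ≤ energy r τ := by
  set o := r i (τ i)
  set d := r i (τ' i)
  set T := insert d (cluster r τ)
  let E (m : α → ℕ) (w : α) : ℕ := ((m w : ℤ) - 1).natAbs
  have hsplit (m : α → ℕ) :
      ∑ w ∈ T, E m w = E m o + E m d + ∑ w ∈ (T.erase o).erase d, E m w := by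
    rw [add_assoc, Finset.add_sum_erase _ _ (Finset.mem_erase.mpr ⟨h.dest_ne_origin,
      Finset.mem_insert_self ..⟩), Finset.add_sum_erase _ _
      (Finset.mem_insert_of_mem (mem_cluster_of_le le_rfl))]
  have hrest : ∑ w ∈ (T.erase o).erase d, E (mult r τ') w
      = ∑ w ∈ (T.erase o).erase d, E (mult r τ) w := by
    refine Finset.sum_congr rfl fun w hw => ?_
    simp only [Finset.mem_erase] at hw
    simp only [E, h.mult_of_ne hw.2.1 hw.1]
  have hzero : d ∉ cluster r τ → mult r τ d = 0 := fun hd =>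
    Nat.eq_zero_of_not_pos fun hpos => hd (mem_cluster_of_mult_pos hpos)
  -- a site outside the cluster contributes `|0 - 1| = 1` to the sum over `T`
  have hT : ∑ w ∈ T, E (mult r τ) w = energy r τ + if d ∈ cluster r τ then 0 else 1 := by
    by_cases hd : d ∈ cluster r τ
    · rw [show T = cluster r τ from Finset.insert_eq_of_mem hd, if_pos hd, add_zero]; rfl
    · rw [Finset.sum_insert hd, if_neg hd, add_comm]
      simp [E, hzero hd, energy]
  have hmo : mult r τ' o + 1 = mult r τ o := h.mult_origin
  have hmd : mult r τ' d = mult r τ d + 1 := h.mult_dest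
  have hmo₂ : 2 ≤ mult r τ o := h.1
  rw [energy, h.cluster_eq, hsplit, hrest]
  rw [hsplit] at hT
  simp only [E] at hT ⊢
  split_ifs at hT ⊢ <;> grind

lemma lt_of_isPebbleIndex (h : PebbleMove r τ i τ') (hm : 2 ≤ mult r τ' (r i (τ' i)))
    (hj : IsPebbleIndex r τ' j (r i (τ' i))) : i < j := by
  have hpos : 0 < mult r τ (r i (τ' i)) := by have := h.mult_dest; omega
  obtain ⟨j', hij', hj'⟩ := h.isDest.exists_lt_of_mult_pos hpos
  exact hij'.trans_le (hj.2 j' (by rwa [h.apply_of_ne hij'.ne']))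

lemma mult_dest_eq_zero (h : PebbleMove r τ i τ')
    (hdest : ∀ i', IsPebbleIndex r τ' i' (r i (τ' i)) →
      ∃ t, τ' i' < t ∧ IsDest r τ' i' (r i' t))
    (hstop : ¬ ∃ i' τ'', IsPebbleIndex r τ' i' (r i (τ' i)) ∧ PebbleMove r τ' i' τ'') :
    mult r τ (r i (τ' i)) = 0 := by
  by_contra hne
  have hm : 2 ≤ mult r τ' (r i (τ' i)) := by have := h.mult_dest; omega
  obtain ⟨i', hi'⟩ : ∃ i', IsPebbleIndex r τ' i' (r i (τ' i)) :=
    exists_isPebbleIndex (by omega)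
  obtain ⟨τ'', hτ''⟩ := exists_pebbleMove hi' hm (hdest i' hi')
  exact hstop ⟨i', τ'', hi', hτ''⟩

end PebbleMove

end

end IDLA

theorem cascade_of_pebble_moves_general
    {n : ℕ} {α : Type*} [DecidableEq α] {ℓ : Fin n → ℕ}
    (r : ∀ i, Fin (ℓ i) → α)
    (k : ℕ) (hk : 1 ≤ k)
    (τs : ℕ → ∀ i, Fin (ℓ i)) (lab : ℕ → Fin n)
    (hstep : ∀ m, m < k → IDLA.PebbleMove r (τs m) (lab m) (τs (m + 1)))
    (hlink : ∀ m, m + 1 < k →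
      IDLA.IsPebbleIndex r (τs (m + 1)) (lab (m + 1)) (r (lab m) (τs (m + 1) (lab m)))) :
    -- (a)
    (∀ (τ τ' : ∀ i, Fin (ℓ i)) (i : Fin n), IDLA.WellOrdered r τ →
      IDLA.PebbleMove r τ i τ' → 1 ≤ IDLA.mult r τ (r i (τ' i)) →
      ∃ j, i < j ∧ r j (τ j) = r i (τ' i)) ∧
    -- (b)
    (∀ m m', m < m' → m' < k → lab m < lab m') ∧ k ≤ n ∧
    -- (c)
    (((∀ i' : Fin n,
        IDLA.IsPebbleIndex r (τs k) i' (r (lab (k - 1)) (τs k (lab (k - 1)))) →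
        ∃ t' : Fin (ℓ i'), τs k i' < t' ∧ IDLA.IsDest r (τs k) i' (r i' t')) ∧
      ¬ ∃ (i' : Fin n) (τ' : ∀ i, Fin (ℓ i)),
        IDLA.IsPebbleIndex r (τs k) i' (r (lab (k - 1)) (τs k (lab (k - 1)))) ∧
        IDLA.PebbleMove r (τs k) i' τ') →
      ((r (lab (k - 1)) (τs k (lab (k - 1))) ∉ IDLA.cluster r (τs (k - 1)) ∨
        (r (lab (k - 1)) (τs k (lab (k - 1))) ∈ IDLA.cluster r (τs (k - 1)) ∧
          IDLA.mult r (τs (k - 1)) (r (lab (k - 1)) (τs k (lab (k - 1)))) = 0)) ∧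
        IDLA.energy r (τs k) + 1 ≤ IDLA.energy r (τs 0))) := by
  have hmono : StrictMonoOn lab (Set.Iio k) :=
    strictMonoOn_of_lt_succ Set.ordConnected_Iio fun m _ _ hm => by
      simp only [Order.succ_eq_add_one, Set.mem_Iio] at hm ⊢
      exact (hstep m (by omega)).lt_of_isPebbleIndex ((hlink m hm).1 ▸ (hstep (m + 1) hm).1)
        (hlink m hm)
  have hanti : AntitoneOn (fun m => IDLA.energy r (τs m)) (Set.Iio k) :=
    antitoneOn_of_succ_le Set.ordConnected_Iio fun m _ hm _ => by
      simpa using (hstep m hm).energy_add_le.trans' (Nat.le_add_right _ _)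
  refine ⟨fun _ _ _ _ h hocc => h.isDest.exists_lt_of_mult_pos hocc,
    fun m m' hmm' hm' => hmono (hmm'.trans hm') hm' hmm', ?_, ?_⟩
  · simpa using Finset.card_le_card_of_injOn lab (s := Finset.range k) (t := Finset.univ)
      (fun _ _ => Finset.mem_univ _) (by simpa using hmono.injOn)
  · rintro ⟨hdest, hstop⟩
    obtain ⟨k, rfl⟩ := Nat.exists_eq_add_of_le' hk
    simp only [Nat.add_sub_cancel] at hdest hstop ⊢
    have hlast := hstep k k.lt_succ_self
    have hzero := hlast.mult_dest_eq_zero hdest hstop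
    refine ⟨by tauto, ?_⟩
    calc IDLA.energy r (τs (k + 1)) + 1 ≤ IDLA.energy r (τs k) := by
          simpa [hzero] using hlast.energy_add_le
      _ ≤ IDLA.energy r (τs 0) := hanti (by simp) (by simp) k.zero_le

/-- Cascades of pebble moves terminate and strictly decrease the
energy.  (a) In a well-ordered configuration, whenever the destination of a pebble move
of a label `i` is an occupied site, the pebble index of that site exceeds `i`.
(b) In any cascade of pebble moves — a sequence of pebble moves in which each subsequent
move moves the pebble index of the previous move's destination site — the moved labels
are strictly increasing, so the cascade has length at most `n`.  (c) If at every step of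
the cascade the moved label has a destination (here: every pebble index of the last
destination site has a destination, but no further pebble move extends the cascade),
then the final move of the cascade has as destination a hole or a site outside the
cluster `S`, so the cascade strictly decreases the energy, by at least `1`. -/
theorem cascade_of_pebble_moves
    {n : ℕ} {α : Type*} [DecidableEq α] {ℓ : Fin n → ℕ}
    (r : ∀ i, Fin (ℓ i) → α) (hr : ∀ i, Function.Injective (r i))
    (k : ℕ) (hk : 1 ≤ k)
    (τs : ℕ → ∀ i, Fin (ℓ i)) (lab : ℕ → Fin n)
    (h0 : IDLA.WellOrdered r (τs 0))
    (hstep : ∀ m, m < k → IDLA.PebbleMove r (τs m) (lab m) (τs (m + 1)))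
    (hlink : ∀ m, m + 1 < k →
      IDLA.IsPebbleIndex r (τs (m + 1)) (lab (m + 1)) (r (lab m) (τs (m + 1) (lab m)))) :
    -- (a)
    (∀ (τ τ' : ∀ i, Fin (ℓ i)) (i : Fin n), IDLA.WellOrdered r τ →
      IDLA.PebbleMove r τ i τ' → 1 ≤ IDLA.mult r τ (r i (τ' i)) →
      ∃ j, i < j ∧ r j (τ j) = r i (τ' i)) ∧
    -- (b)
    (∀ m m', m < m' → m' < k → lab m < lab m') ∧ k ≤ n ∧
    -- (c)
    (((∀ i' : Fin n,
        IDLA.IsPebbleIndex r (τs k) i' (r (lab (k - 1)) (τs k (lab (k - 1)))) →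
        ∃ t' : Fin (ℓ i'), τs k i' < t' ∧ IDLA.IsDest r (τs k) i' (r i' t')) ∧
      ¬ ∃ (i' : Fin n) (τ' : ∀ i, Fin (ℓ i)),
        IDLA.IsPebbleIndex r (τs k) i' (r (lab (k - 1)) (τs k (lab (k - 1)))) ∧
        IDLA.PebbleMove r (τs k) i' τ') →
      ((r (lab (k - 1)) (τs k (lab (k - 1))) ∉ IDLA.cluster r (τs (k - 1)) ∨
        (r (lab (k - 1)) (τs k (lab (k - 1))) ∈ IDLA.cluster r (τs (k - 1)) ∧
          IDLA.mult r (τs (k - 1)) (r (lab (k - 1)) (τs k (lab (k - 1)))) = 0)) ∧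
        IDLA.energy r (τs k) + 1 ≤ IDLA.energy r (τs 0))) :=
  cascade_of_pebble_moves_general r k hk τs lab hstep hlink
end
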